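/- Let A, B, C be finite-dimensional complex vector spaces, let a, a' ∈ A be linearly independent, let b1, b2 ∈ B be linearly independent, let c1, c2 ∈ C be linearly independent, and let b ∈ ⟨b1,b2⟩ and c ∈ ⟨c1,c2⟩ be nonzero. Let S = a⊗⟨b1,b2⟩⊗c + a'⊗b⊗⟨c1,c2⟩ ⊆ A⊗B⊗C. Then S is 4-dimensional, and a nonzero simple tensor lies in S if and only if it has one of the following three forms: (i) a⊗b'⊗c with b' ∈ ⟨b1,b2⟩ (a point of the β-line L_β), (ii) a'⊗b⊗c' with c' ∈ ⟨c1,c2⟩ (a point of the γ-line L_γ), or (iii) (λa + μa')⊗b⊗c for scalars λ, μ (a point of the α-line L_α = ℙ(⟨a,a'⟩⊗b⊗c), which intersects both L_β and L_γ). -/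
import Mathlib

open scoped TensorProduct

namespace TwoLineAux

variable {M N : Type*} [AddCommGroup M] [Module ℂ M] [AddCommGroup N] [Module ℂ N]

/-- Apply a functional on the left factor of a tensor product. -/
noncomputable def appL (f : M →ₗ[ℂ] ℂ) : M ⊗[ℂ] N →ₗ[ℂ] N :=
  (TensorProduct.lid ℂ N).toLinearMap ∘ₗ f.rTensor N

@[simp] lemma appL_tmul (f : M →ₗ[ℂ] ℂ) (x : M) (y : N) :
    appL f (x ⊗ₜ y) = f x • y := by
  simp [appL]

/-- Apply a functional on the right factor of a tensor product. -/
noncomputable def appR (g : N →ₗ[ℂ] ℂ) : M ⊗[ℂ] N →ₗ[ℂ] M :=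
  (TensorProduct.rid ℂ M).toLinearMap ∘ₗ g.lTensor M

@[simp] lemma appR_tmul (g : N →ₗ[ℂ] ℂ) (x : M) (y : N) :
    appR (M := M) g (x ⊗ₜ y) = g y • x := by
  simp [appR]

lemma exists_dual_one {x : M} (hx : x ≠ 0) : ∃ f : M →ₗ[ℂ] ℂ, f x = 1 := by
  obtain ⟨f, hf, -⟩ := Submodule.exists_dual_map_eq_bot_of_notMem
    (p := (⊥ : Submodule ℂ M)) (by simpa using hx) inferInstance
  exact ⟨(f x)⁻¹ • f, by simp [inv_mul_cancel₀ hf]⟩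

lemma eq_zero_of_tmul_eq_zero_left {x : M} {y : N} (h : x ⊗ₜ[ℂ] y = 0) (hx : x ≠ 0) :
    y = 0 := by
  obtain ⟨f, hf⟩ := exists_dual_one hx
  have := congrArg (appL (N := N) f) h
  simpa [hf] using this

lemma eq_zero_of_tmul_eq_zero_right {x : M} {y : N} (h : x ⊗ₜ[ℂ] y = 0) (hy : y ≠ 0) :
    x = 0 := by
  obtain ⟨g, hg⟩ := exists_dual_one hy
  have := congrArg (appR (M := M) g) h
  simpa [hg] using this

/-- Dual pair for two linearly independent vectors. -/
lemma exists_dual_pair {x y : M} (h : LinearIndependent ℂ ![x, y]) :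
    ∃ f f' : M →ₗ[ℂ] ℂ, f x = 1 ∧ f y = 0 ∧ f' x = 0 ∧ f' y = 1 := by
  rw [LinearIndependent.pair_iff] at h
  have hxy : x ∉ Submodule.span ℂ {y} := by
    intro hx
    obtain ⟨s, hs⟩ := Submodule.mem_span_singleton.mp hx
    have := (h (-1) s (by rw [← hs]; module)).1
    norm_num at this
  have hyx : y ∉ Submodule.span ℂ {x} := by
    intro hy
    obtain ⟨s, hs⟩ := Submodule.mem_span_singleton.mp hy
    have := (h s (-1) (by rw [← hs]; module)).2
    norm_num at this
  obtain ⟨f, hf, hfmap⟩ := Submodule.exists_dual_map_eq_bot_of_notMem hxy inferInstance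
  obtain ⟨f', hf', hfmap'⟩ := Submodule.exists_dual_map_eq_bot_of_notMem hyx inferInstance
  have hfy : f y = 0 := by
    have hm : f y ∈ Submodule.map f (Submodule.span ℂ {y}) :=
      ⟨y, Submodule.mem_span_singleton_self y, rfl⟩
    rw [hfmap] at hm; simpa using hm
  have hfx : f' x = 0 := by
    have hm : f' x ∈ Submodule.map f' (Submodule.span ℂ {x}) :=
      ⟨x, Submodule.mem_span_singleton_self x, rfl⟩
    rw [hfmap'] at hm; simpa using hm
  exact ⟨(f x)⁻¹ • f, (f' y)⁻¹ • f', by simp [inv_mul_cancel₀ hf],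
    by simp [hfy], by simp [hfx], by simp [inv_mul_cancel₀ hf']⟩

end TwoLineAux

/-- The subspace `S = a ⊗ ⟨b1,b2⟩ ⊗ c + a' ⊗ b ⊗ ⟨c1,c2⟩` of `A ⊗ B ⊗ C`. -/
noncomputable def twoLineSpan {A B C : Type*}
    [AddCommGroup A] [Module ℂ A] [AddCommGroup B] [Module ℂ B] [AddCommGroup C] [Module ℂ C]
    (a a' : A) (b1 b2 b : B) (c1 c2 c : C) : Submodule ℂ (A ⊗[ℂ] (B ⊗[ℂ] C)) :=
  Submodule.span ℂ
    ({x | ∃ v ∈ Submodule.span ℂ {b1, b2}, x = a ⊗ₜ[ℂ] (v ⊗ₜ[ℂ] c)} ∪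
      {x | ∃ w ∈ Submodule.span ℂ {c1, c2}, x = a' ⊗ₜ[ℂ] (b ⊗ₜ[ℂ] w)})

lemma mem_twoLineSpan_iff {A B C : Type*}
    [AddCommGroup A] [Module ℂ A] [AddCommGroup B] [Module ℂ B] [AddCommGroup C] [Module ℂ C]
    (a a' : A) (b1 b2 b : B) (c1 c2 c : C) (x : A ⊗[ℂ] (B ⊗[ℂ] C)) :
    x ∈ twoLineSpan a a' b1 b2 b c1 c2 c ↔
      ∃ v ∈ Submodule.span ℂ {b1, b2}, ∃ w ∈ Submodule.span ℂ {c1, c2},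
        x = a ⊗ₜ[ℂ] (v ⊗ₜ[ℂ] c) + a' ⊗ₜ[ℂ] (b ⊗ₜ[ℂ] w) := by
  set φ : B →ₗ[ℂ] A ⊗[ℂ] (B ⊗[ℂ] C) :=
    (TensorProduct.mk ℂ A (B ⊗[ℂ] C) a).comp ((TensorProduct.mk ℂ B C).flip c) with hφdef
  set ψ : C →ₗ[ℂ] A ⊗[ℂ] (B ⊗[ℂ] C) :=
    (TensorProduct.mk ℂ A (B ⊗[ℂ] C) a').comp (TensorProduct.mk ℂ B C b) with hψdef
  have hφ : ∀ v, φ v = a ⊗ₜ[ℂ] (v ⊗ₜ[ℂ] c) := fun v => rfl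
  have hψ : ∀ w, ψ w = a' ⊗ₜ[ℂ] (b ⊗ₜ[ℂ] w) := fun w => rfl
  have h1 : {x | ∃ v ∈ Submodule.span ℂ {b1, b2}, x = a ⊗ₜ[ℂ] (v ⊗ₜ[ℂ] c)}
      = φ '' (Submodule.span ℂ {b1, b2} : Set B) := by
    ext y
    simp only [Set.mem_setOf_eq, Set.mem_image, SetLike.mem_coe, hφ]
    constructor
    · rintro ⟨v, hv, rfl⟩; exact ⟨v, hv, rfl⟩
    · rintro ⟨v, hv, rfl⟩; exact ⟨v, hv, rfl⟩
  have h2 : {x | ∃ w ∈ Submodule.span ℂ {c1, c2}, x = a' ⊗ₜ[ℂ] (b ⊗ₜ[ℂ] w)}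
      = ψ '' (Submodule.span ℂ {c1, c2} : Set C) := by
    ext y
    simp only [Set.mem_setOf_eq, Set.mem_image, SetLike.mem_coe, hψ]
    constructor
    · rintro ⟨w, hw, rfl⟩; exact ⟨w, hw, rfl⟩
    · rintro ⟨w, hw, rfl⟩; exact ⟨w, hw, rfl⟩
  have hS : twoLineSpan a a' b1 b2 b c1 c2 c
      = Submodule.map φ (Submodule.span ℂ {b1, b2})
        ⊔ Submodule.map ψ (Submodule.span ℂ {c1, c2}) := by
    rw [twoLineSpan, h1, h2, Submodule.span_union, Submodule.span_image, Submodule.span_image,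
      Submodule.span_eq, Submodule.span_eq]
  rw [hS, Submodule.mem_sup]
  constructor
  · rintro ⟨y, hy, z, hz, rfl⟩
    obtain ⟨v, hv, rfl⟩ := hy
    obtain ⟨w, hw, rfl⟩ := hz
    exact ⟨v, hv, w, hw, rfl⟩
  · rintro ⟨v, hv, w, hw, rfl⟩
    exact ⟨φ v, ⟨v, hv, rfl⟩, ψ w, ⟨w, hw, rfl⟩, rfl⟩

/-- `S = a⊗⟨b1,b2⟩⊗c + a'⊗b⊗⟨c1,c2⟩` is 4-dimensional, and a nonzero simple tensor lies in `S`
iff it is a point of the β-line `a⊗⟨b1,b2⟩⊗c`, of the γ-line `a'⊗b⊗⟨c1,c2⟩`, or of the α-line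
`⟨a,a'⟩⊗b⊗c`. -/
theorem twoLineSpan_finrank_and_rank_one_points {A B C : Type*}
    [AddCommGroup A] [Module ℂ A] [FiniteDimensional ℂ A]
    [AddCommGroup B] [Module ℂ B] [FiniteDimensional ℂ B]
    [AddCommGroup C] [Module ℂ C] [FiniteDimensional ℂ C]
    (a a' : A) (ha : LinearIndependent ℂ ![a, a'])
    (b1 b2 : B) (hb12 : LinearIndependent ℂ ![b1, b2])
    (c1 c2 : C) (hc12 : LinearIndependent ℂ ![c1, c2])
    (b : B) (hb : b ∈ Submodule.span ℂ {b1, b2}) (hb0 : b ≠ 0)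
    (c : C) (hc : c ∈ Submodule.span ℂ {c1, c2}) (hc0 : c ≠ 0) :
    Module.finrank ℂ (twoLineSpan a a' b1 b2 b c1 c2 c) = 4 ∧
    ∀ (u : A) (v : B) (w : C), (u ⊗ₜ[ℂ] (v ⊗ₜ[ℂ] w) : A ⊗[ℂ] (B ⊗[ℂ] C)) ≠ 0 →
      (u ⊗ₜ[ℂ] (v ⊗ₜ[ℂ] w) ∈ twoLineSpan a a' b1 b2 b c1 c2 c ↔
        (∃ b' ∈ Submodule.span ℂ {b1, b2}, u ⊗ₜ[ℂ] (v ⊗ₜ[ℂ] w) = a ⊗ₜ[ℂ] (b' ⊗ₜ[ℂ] c)) ∨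
        (∃ c' ∈ Submodule.span ℂ {c1, c2}, u ⊗ₜ[ℂ] (v ⊗ₜ[ℂ] w) = a' ⊗ₜ[ℂ] (b ⊗ₜ[ℂ] c')) ∨
        (∃ lam mu : ℂ, u ⊗ₜ[ℂ] (v ⊗ₜ[ℂ] w) = (lam • a + mu • a') ⊗ₜ[ℂ] (b ⊗ₜ[ℂ] c))) := by
  classical
  obtain ⟨f, f', hfa, hfa', hf'a, hf'a'⟩ := TwoLineAux.exists_dual_pair ha
  constructor
  · -- dimension computation
    set t : Fin 4 → A ⊗[ℂ] (B ⊗[ℂ] C) :=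
      ![a ⊗ₜ (b1 ⊗ₜ c), a ⊗ₜ (b2 ⊗ₜ c), a' ⊗ₜ (b ⊗ₜ c1), a' ⊗ₜ (b ⊗ₜ c2)] with ht
    have ht0 : t 0 = a ⊗ₜ (b1 ⊗ₜ c) := rfl
    have ht1 : t 1 = a ⊗ₜ (b2 ⊗ₜ c) := rfl
    have ht2 : t 2 = a' ⊗ₜ (b ⊗ₜ c1) := rfl
    have ht3 : t 3 = a' ⊗ₜ (b ⊗ₜ c2) := rfl
    have hspan : twoLineSpan a a' b1 b2 b c1 c2 c = Submodule.span ℂ (Set.range t) := by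
      apply le_antisymm
      · rw [twoLineSpan, Submodule.span_le]
        rintro x (⟨v, hv, rfl⟩ | ⟨w, hw, rfl⟩)
        · obtain ⟨p, q, rfl⟩ := Submodule.mem_span_pair.mp hv
          have heq : a ⊗ₜ[ℂ] ((p • b1 + q • b2) ⊗ₜ[ℂ] c) = p • t 0 + q • t 1 := by
            simp only [ht0, ht1, TensorProduct.add_tmul, TensorProduct.tmul_add,
              TensorProduct.smul_tmul, TensorProduct.tmul_smul]
          rw [heq]
          exact Submodule.add_mem _
            (Submodule.smul_mem _ _ (Submodule.subset_span ⟨0, rfl⟩))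
            (Submodule.smul_mem _ _ (Submodule.subset_span ⟨1, rfl⟩))
        · obtain ⟨p, q, rfl⟩ := Submodule.mem_span_pair.mp hw
          have heq : a' ⊗ₜ[ℂ] (b ⊗ₜ[ℂ] (p • c1 + q • c2)) = p • t 2 + q • t 3 := by
            rw [ht2, ht3, TensorProduct.tmul_add, TensorProduct.tmul_add,
              TensorProduct.tmul_smul, TensorProduct.tmul_smul, TensorProduct.tmul_smul,
              TensorProduct.tmul_smul]
          rw [heq]
          exact Submodule.add_mem _
            (Submodule.smul_mem _ _ (Submodule.subset_span ⟨2, rfl⟩))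
            (Submodule.smul_mem _ _ (Submodule.subset_span ⟨3, rfl⟩))
      · rw [Submodule.span_le]
        rintro x ⟨i, rfl⟩
        fin_cases i
        · exact Submodule.subset_span
            (Or.inl ⟨b1, Submodule.subset_span (Set.mem_insert _ _), rfl⟩)
        · exact Submodule.subset_span
            (Or.inl ⟨b2, Submodule.subset_span (by simp), rfl⟩)
        · exact Submodule.subset_span
            (Or.inr ⟨c1, Submodule.subset_span (Set.mem_insert _ _), rfl⟩)
        · exact Submodule.subset_span
            (Or.inr ⟨c2, Submodule.subset_span (by simp), rfl⟩)
    have hind : LinearIndependent ℂ t := by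
      rw [Fintype.linearIndependent_iff]
      intro g hg
      rw [Fin.sum_univ_four, ht0, ht1, ht2, ht3] at hg
      have h1 := congrArg (TwoLineAux.appL (N := B ⊗[ℂ] C) f) hg
      have h2 := congrArg (TwoLineAux.appL (N := B ⊗[ℂ] C) f') hg
      simp only [map_add, map_smul, TwoLineAux.appL_tmul, hfa, hfa', hf'a, hf'a', one_smul,
        zero_smul, smul_zero, add_zero, zero_add, map_zero] at h1 h2
      have hb1 : (g 0 • b1 + g 1 • b2) ⊗ₜ[ℂ] c = 0 := by
        rw [TensorProduct.add_tmul, ← TensorProduct.smul_tmul', ← TensorProduct.smul_tmul']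
        exact h1
      have hc1 : b ⊗ₜ[ℂ] (g 2 • c1 + g 3 • c2) = 0 := by
        rw [TensorProduct.tmul_add, TensorProduct.tmul_smul, TensorProduct.tmul_smul]
        exact h2
      have hg01 := (LinearIndependent.pair_iff.mp hb12) (g 0) (g 1)
        (TwoLineAux.eq_zero_of_tmul_eq_zero_right hb1 hc0)
      have hg23 := (LinearIndependent.pair_iff.mp hc12) (g 2) (g 3)
        (TwoLineAux.eq_zero_of_tmul_eq_zero_left hc1 hb0)
      intro i
      fin_cases i
      · exact hg01.1
      · exact hg01.2
      · exact hg23.1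
      · exact hg23.2
    rw [hspan, finrank_span_eq_card hind]
    simp
  · -- classification of simple tensors
    intro u v w hne
    constructor
    · intro hmem
      obtain ⟨v', hv', w', hw', heq⟩ := (mem_twoLineSpan_iff a a' b1 b2 b c1 c2 c _).mp hmem
      have hvw : (v ⊗ₜ[ℂ] w : B ⊗[ℂ] C) ≠ 0 := fun h => hne (by rw [h, TensorProduct.tmul_zero])
      -- u lies in span {a, a'}
      have humem : u ∈ Submodule.span ℂ {a, a'} := by
        by_contra hu'
        obtain ⟨g, hg1, hg2⟩ := Submodule.exists_dual_map_eq_bot_of_notMem hu' inferInstance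
        have hga : g a = 0 := by
          have hm : g a ∈ Submodule.map g (Submodule.span ℂ {a, a'}) :=
            ⟨a, Submodule.subset_span (Set.mem_insert _ _), rfl⟩
          rw [hg2] at hm; simpa using hm
        have hga' : g a' = 0 := by
          have hm : g a' ∈ Submodule.map g (Submodule.span ℂ {a, a'}) :=
            ⟨a', Submodule.subset_span (by simp), rfl⟩
          rw [hg2] at hm; simpa using hm
        have := congrArg (TwoLineAux.appL (N := B ⊗[ℂ] C) g) heq
        simp only [map_add, TwoLineAux.appL_tmul, hga, hga', zero_smul, add_zero] at this
        exact hvw (by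
          have : g u • (v ⊗ₜ[ℂ] w) = 0 := this
          rcases smul_eq_zero.mp this with h | h
          · exact absurd h hg1
          · exact h)
      obtain ⟨lam0, mu0, hu_eq⟩ := Submodule.mem_span_pair.mp humem
      have h1 : lam0 • (v ⊗ₜ[ℂ] w) = v' ⊗ₜ[ℂ] c := by
        have := congrArg (TwoLineAux.appL (N := B ⊗[ℂ] C) f) heq
        have hfu : f u = lam0 := by
          rw [← hu_eq]; simp [hfa, hfa']
        simpa [hfu, hfa, hfa'] using this
      have h2 : mu0 • (v ⊗ₜ[ℂ] w) = b ⊗ₜ[ℂ] w' := by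
        have := congrArg (TwoLineAux.appL (N := B ⊗[ℂ] C) f') heq
        have hf'u : f' u = mu0 := by
          rw [← hu_eq]; simp [hf'a, hf'a']
        simpa [hf'u, hf'a, hf'a'] using this
      by_cases hlam : lam0 = 0
      · -- γ-line case
        refine Or.inr (Or.inl ⟨w', hw', ?_⟩)
        have hz : v' ⊗ₜ[ℂ] c = 0 := by rw [← h1, hlam, zero_smul]
        rw [heq, hz, TensorProduct.tmul_zero, zero_add]
      · by_cases hmu : mu0 = 0
        · -- β-line case
          refine Or.inl ⟨v', hv', ?_⟩
          have hz : b ⊗ₜ[ℂ] w' = 0 := by rw [← h2, hmu, zero_smul]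
          rw [heq, hz, TensorProduct.tmul_zero, add_zero]
        · -- α-line case
          obtain ⟨h, hhc⟩ := TwoLineAux.exists_dual_one hc0
          have hcross : mu0 • (v' ⊗ₜ[ℂ] c) = lam0 • (b ⊗ₜ[ℂ] w') := by
            rw [← h1, ← h2, smul_comm]
          have hv'b : mu0 • v' = (lam0 * h w') • b := by
            have := congrArg (TwoLineAux.appR (M := B) h) hcross
            simp only [map_smul, TwoLineAux.appR_tmul, hhc, one_smul] at this
            rw [this, smul_smul]
          have hvw_eq : v ⊗ₜ[ℂ] w = (mu0⁻¹ * h w') • (b ⊗ₜ[ℂ] c) := by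
            have hstep : lam0 • (v ⊗ₜ[ℂ] w) = (mu0⁻¹ * lam0 * h w') • (b ⊗ₜ[ℂ] c) := by
              rw [h1]
              have : v' = (mu0⁻¹ * (lam0 * h w')) • b := by
                rw [← smul_smul, ← hv'b, smul_smul, inv_mul_cancel₀ hmu, one_smul]
              rw [this, TensorProduct.smul_tmul']
              ring_nf
            have := congrArg (fun z => lam0⁻¹ • z) hstep
            simp only [smul_smul, inv_mul_cancel₀ hlam, one_smul] at this
            rw [this]
            congr 1
            field_simp
          refine Or.inr (Or.inr ⟨(mu0⁻¹ * h w') * lam0, (mu0⁻¹ * h w') * mu0, ?_⟩)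
          rw [hvw_eq, TensorProduct.tmul_smul, ← hu_eq, TensorProduct.add_tmul, smul_add,
            TensorProduct.smul_tmul', TensorProduct.smul_tmul', smul_smul, smul_smul,
            ← TensorProduct.add_tmul]
    · rintro (⟨b', hb', heq⟩ | ⟨c', hc', heq⟩ | ⟨l, m, heq⟩) <;> rw [heq]
      · exact Submodule.subset_span (Or.inl ⟨b', hb', rfl⟩)
      · exact Submodule.subset_span (Or.inr ⟨c', hc', rfl⟩)
      · rw [TensorProduct.add_tmul, ← TensorProduct.smul_tmul', ← TensorProduct.smul_tmul']
        exact Submodule.add_mem _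
          (Submodule.smul_mem _ _ (Submodule.subset_span (Or.inl ⟨b, hb, rfl⟩)))
          (Submodule.smul_mem _ _ (Submodule.subset_span (Or.inr ⟨c, hc, rfl⟩)))
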